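/- arXiv:1305.4027 — 2 statements merged into one kernel-verified Lean document; each statement's English description precedes it below -/
import Mathlib

section
/- For the 2-random coordinate descent method with probabilities p_{ij} applied to min{f(x) : aᵀx = b} with smooth f (h = 0), one step satisfies E[f(x⁺) | x] ≤ f(x) − (ν₂(Q)/2)‖∇f(x)_⊥‖², where ∇f(x)_⊥ is the orthogonal projection of ∇f(x) onto S = {s : aᵀs = 0}, Q = Σ_{i,j} (p_{ij}/L_{ij}) Q_{ij}, and ν₂(Q) is the second smallest eigenvalue of Q. Consequently min_{0 ≤ l ≤ k} E[‖∇f(x^l)_⊥‖²] ≤ 2(f(x⁰) − f*)/(ν₂(Q)(k+1)). -/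
/-! Averaging the per-pair decrease `f(x⁺) ≤ f(x) − ⟪∇f, Q_{ij} ∇f⟫ / (2 L_{ij})` with the
weights `p_{ij}` gives `E f(x⁺) ≤ f(x) − ⟪∇f, Q ∇f⟫ / 2`. Since `Q` is symmetric and `Q a = 0`, the
quadratic form only sees the component `∇f_⊥` of the gradient in `a^⊥`, where the Rayleigh
quotient is at least `ν₂`. Every `Q_{ij}` maps into `a^⊥`, so the iterates stay feasible and
`f ≥ f*` along them; taking total expectations and telescoping gives
`(ν₂/2) ∑_{l ≤ k} E ‖∇f(xˡ)_⊥‖² ≤ f(x⁰) − f*`, and the minimum is at most the average. -/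

open scoped BigOperators RealInnerProductSpace
open Finset Filter

noncomputable section

/-- The ambient space `ℝ^n` with the Euclidean norm. -/
abbrev En (n : ℕ) := EuclideanSpace ℝ (Fin n)

/-- Projection onto block `i` of the block decomposition of `ℝ^n` given by the
block-index map `blk : Fin n → Fin N`; it realizes `U_i U_iᵀ y`. -/
def blockProj {n N : ℕ} (blk : Fin n → Fin N) (i : Fin N) (y : En n) : En n :=
  WithLp.toLp 2 (fun j => if blk j = i then y j else 0)

/-- The squared block norm `‖x‖_L² = ∑ i, L i ‖x_i‖²`. -/
def blockNormSq {n N : ℕ} (blk : Fin n → Fin N) (L : Fin N → ℝ) (x : En n) : ℝ :=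
  ∑ i, L i * ‖blockProj blk i x‖ ^ 2

/-- Matrix–vector multiplication landing in Euclidean space. -/
def mvE {n : ℕ} (Q : Matrix (Fin n) (Fin n) ℝ) (x : En n) : En n :=
  WithLp.toLp 2 (fun r => ∑ c, Q r c * x c)

/-- The matrix `Q_{ij}`: on the rows/columns of blocks `i` and `j` it is the orthogonal
projection onto `{s_{ij} : a_iᵀ s_i + a_jᵀ s_j = 0}`, and zero elsewhere. -/
def Qmat {n N : ℕ} (blk : Fin n → Fin N) (a : Fin n → ℝ) (i j : Fin N) :
    Matrix (Fin n) (Fin n) ℝ := fun r c =>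
  if (blk r = i ∨ blk r = j) ∧ (blk c = i ∨ blk c = j) then
    (if r = c then 1 else 0) -
      a r * a c / (∑ l ∈ Finset.univ.filter (fun l => blk l = i ∨ blk l = j), a l ^ 2)
  else 0

open Matrix

section Rayleigh

variable {E : Type*} [NormedAddCommGroup E] [InnerProductSpace ℝ E]

lemma inner_sub_smul_div_norm_sq (a G : E) : ⟪a, G - (⟪a, G⟫ / ‖a‖ ^ 2) • a⟫ = 0 := by
  rcases eq_or_ne a 0 with rfl | ha
  · simp
  · rw [inner_sub_right, real_inner_smul_right, real_inner_self_eq_norm_sq,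
      div_mul_cancel₀ _ (by positivity), sub_self]

lemma inner_map_sub_smul_self {T : E →ₗ[ℝ] E} (hT : T.IsSymmetric) {a : E} (ha : T a = 0)
    (G : E) (c : ℝ) : ⟪G - c • a, T (G - c • a)⟫ = ⟪G, T G⟫ := by
  rw [map_sub, map_smul, ha, smul_zero, sub_zero, inner_sub_left, real_inner_smul_left,
    ← hT a, ha, inner_zero_left, mul_zero, sub_zero]

lemma mul_norm_sq_le_inner_of_mem_lowerBounds {T : E →ₗ[ℝ] E} {a : E} {ν : ℝ}
    (hν : ν ∈ lowerBounds {r : ℝ | ∃ y : E, ⟪a, y⟫ = 0 ∧ ‖y‖ = 1 ∧ r = ⟪y, T y⟫})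
    {z : E} (hz : ⟪a, z⟫ = 0) : ν * ‖z‖ ^ 2 ≤ ⟪z, T z⟫ := by
  rcases eq_or_ne z 0 with rfl | hz0
  · simp
  have hunit := hν ⟨‖z‖⁻¹ • z, by rw [real_inner_smul_right, hz, mul_zero],
    norm_smul_inv_norm hz0, rfl⟩
  rw [map_smul, real_inner_smul_left, real_inner_smul_right] at hunit
  calc ν * ‖z‖ ^ 2 ≤ ‖z‖⁻¹ * (‖z‖⁻¹ * ⟪z, T z⟫) * ‖z‖ ^ 2 := by gcongr
    _ = ⟪z, T z⟫ := by field_simp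

lemma mul_norm_sq_perp_le_inner {T : E →ₗ[ℝ] E} (hT : T.IsSymmetric) {a : E} (ha : T a = 0)
    {ν : ℝ} (hν : ν ∈ lowerBounds {r : ℝ | ∃ y : E, ⟪a, y⟫ = 0 ∧ ‖y‖ = 1 ∧ r = ⟪y, T y⟫})
    (G : E) : ν * ‖G - (⟪a, G⟫ / ‖a‖ ^ 2) • a‖ ^ 2 ≤ ⟪G, T G⟫ := by
  rw [← inner_map_sub_smul_self hT ha G]
  exact mul_norm_sq_le_inner_of_mem_lowerBounds hν (inner_sub_smul_div_norm_sq a G)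

end Rayleigh

lemma path_mem_of_mapsTo {E P : Type*} {step : P → E → E} {X : (k : ℕ) → (Fin k → P) → E}
    (hX : ∀ k w, X (k + 1) w = step (w (Fin.last k)) (X k fun t => w t.castSucc))
    {C : Set E} (hC : ∀ q, Set.MapsTo (step q) C C) (h0 : ∀ w, X 0 w ∈ C) (k : ℕ)
    (w : Fin k → P) : X k w ∈ C := by
  induction k with
  | zero => exact h0 w
  | succ k ih => rw [hX]; exact hC _ (ih _)

section RandomPath

variable {E P : Type*} [Fintype P] (p : P → ℝ)

def pathMean {k : ℕ} (F : (Fin k → P) → ℝ) : ℝ := ∑ w, (∏ t, p (w t)) * F w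

lemma sum_prod_eq_one (hp : ∑ q, p q = 1) (k : ℕ) : ∑ w : Fin k → P, ∏ t, p (w t) = 1 := by
  rw [← Fintype.sum_pow, hp, one_pow]

lemma le_pathMean (hp0 : ∀ q, 0 ≤ p q) (hp : ∑ q, p q = 1) {k : ℕ} {F : (Fin k → P) → ℝ}
    {m : ℝ} (hm : ∀ w, m ≤ F w) : m ≤ pathMean p F := by
  calc m = ∑ w : Fin k → P, (∏ t, p (w t)) * m := by rw [← sum_mul, sum_prod_eq_one p hp, one_mul]
    _ ≤ pathMean p F := sum_le_sum fun w _ =>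
      mul_le_mul_of_nonneg_left (hm w) (prod_nonneg fun t _ => hp0 _)

lemma pathMean_zero (F : (Fin 0 → P) → ℝ) : pathMean p F = F Fin.elim0 := by
  simp [pathMean, Subsingleton.elim _ (Fin.elim0 : Fin 0 → P)]

lemma pathMean_succ {k : ℕ} (F : (Fin (k + 1) → P) → ℝ) :
    pathMean p F = pathMean p fun v => ∑ q, p q * F (Fin.snoc v q) := by
  simp only [pathMean, mul_sum]
  rw [← (Fin.snocEquiv fun _ => P).sum_comp, Fintype.sum_prod_type, sum_comm]
  refine sum_congr rfl fun v _ => sum_congr rfl fun q _ => ?_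
  change (∏ t, p ((Fin.snoc v q : Fin (k + 1) → P) t)) * F (Fin.snoc v q) = _
  simp only [Fin.prod_univ_castSucc, Fin.snoc_castSucc, Fin.snoc_last]
  ring

lemma pathMean_succ_le {step : P → E → E} {X : (k : ℕ) → (Fin k → P) → E}
    (hX : ∀ k w, X (k + 1) w = step (w (Fin.last k)) (X k fun t => w t.castSucc))
    (hp0 : ∀ q, 0 ≤ p q) (V G : E → ℝ) (c : ℝ)
    (hV : ∀ x, ∑ q, p q * V (step q x) ≤ V x - c * G x) (k : ℕ) :
    pathMean p (fun w => V (X (k + 1) w)) ≤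
      pathMean p (fun w => V (X k w)) - c * pathMean p (fun w => G (X k w)) := by
  rw [pathMean_succ]
  simp only [hX, Fin.snoc_last, Fin.snoc_castSucc]
  calc pathMean p (fun v => ∑ q, p q * V (step q (X k v)))
      ≤ pathMean p (fun v => V (X k v) - c * G (X k v)) :=
        sum_le_sum fun v _ => mul_le_mul_of_nonneg_left (hV _) (prod_nonneg fun t _ => hp0 _)
    _ = _ := by
        simp only [pathMean, mul_sum, ← sum_sub_distrib]
        exact sum_congr rfl fun w _ => by ring

end RandomPath

lemma exists_le_of_descent {e γ : ℕ → ℝ} {m ν : ℝ} (hν : 0 < ν)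
    (hdesc : ∀ l, e (l + 1) ≤ e l - ν / 2 * γ l) (hm : ∀ l, m ≤ e l) (k : ℕ) :
    ∃ l ≤ k, γ l ≤ 2 * (e 0 - m) / (ν * (k + 1)) := by
  have htotal : ν / 2 * ∑ l ∈ range (k + 1), γ l ≤ e 0 - m := by
    calc ν / 2 * ∑ l ∈ range (k + 1), γ l ≤ ∑ l ∈ range (k + 1), (e l - e (l + 1)) := by
          rw [mul_sum]
          exact sum_le_sum fun l _ => by linarith [hdesc l]
      _ ≤ e 0 - m := by linarith [sum_range_sub' e (k + 1), hm (k + 1)]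
  have havg : ∑ l ∈ range (k + 1), γ l ≤
      ∑ _l ∈ range (k + 1), 2 * (e 0 - m) / (ν * (k + 1)) := by
    rw [sum_const, card_range, nsmul_eq_mul, Nat.cast_succ, mul_div_assoc',
      le_div_iff₀ (by positivity)]
    nlinarith
  obtain ⟨l, hl, hγ⟩ := exists_le_of_sum_le nonempty_range_add_one havg
  exact ⟨l, Nat.lt_succ_iff.mp (mem_range.mp hl), hγ⟩

lemma mvE_eq_toEuclideanLin {n : ℕ} (Q : Matrix (Fin n) (Fin n) ℝ) :
    mvE Q = toEuclideanLin Q := rfl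

section Qmat

variable {n N : ℕ} (blk : Fin n → Fin N)

lemma Qmat_isHermitian (v : Fin n → ℝ) (i j : Fin N) : (Qmat blk v i j).IsHermitian :=
  IsHermitian.ext fun r c => by
    simp only [Qmat, star_trivial, and_comm (a := blk c = i ∨ blk c = j), eq_comm (a := c),
      mul_comm (v c)]

lemma Qmat_mulVec_self (v : Fin n → ℝ) (i j : Fin N) : Qmat blk v i j *ᵥ v = 0 := by
  set B := univ.filter (fun l => blk l = i ∨ blk l = j)
  set S := ∑ l ∈ B, v l ^ 2
  ext r
  by_cases hr : blk r = i ∨ blk r = j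
  · have hrB : r ∈ B := by simpa [B] using hr
    -- when `S = 0` the junk value `x / 0 = 0` is harmless, since then `v r = 0`
    have hvr : v r * S / S = v r := by
      rcases eq_or_ne S 0 with hS | hS
      · have : v r ^ 2 = 0 := le_antisymm
          ((single_le_sum (fun l _ => sq_nonneg (v l)) hrB).trans hS.le) (sq_nonneg _)
        simp [pow_eq_zero_iff two_ne_zero |>.mp this]
      · field_simp
    calc (Qmat blk v i j *ᵥ v) r
        = ∑ c ∈ B, ((if r = c then 1 else 0) - v r * v c / S) * v c := by
          simp only [mulVec, dotProduct, Qmat, hr, true_and, ite_mul, zero_mul]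
          exact (sum_filter _ _).symm
      _ = v r - v r * S / S := by
          simp only [sub_mul, sum_sub_distrib, ite_mul, one_mul, zero_mul, sum_ite_eq, hrB,
            if_true, S, mul_sum, sum_div]
          congr 1
          exact sum_congr rfl fun c _ => by ring
      _ = 0 := by rw [hvr, sub_self]
  · simp [mulVec, dotProduct, Qmat, hr]

lemma isSymmetric_mvE_Qmat (a : En n) (i j : Fin N) :
    (toEuclideanLin (Qmat blk (fun l => a l) i j)).IsSymmetric :=
  isSymmetric_toEuclideanLin_iff.mpr (Qmat_isHermitian ..)

lemma mvE_Qmat_self (a : En n) (i j : Fin N) : mvE (Qmat blk (fun l => a l) i j) a = 0 :=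
  congrArg (WithLp.toLp 2) (Qmat_mulVec_self ..)

lemma inner_mvE_Qmat_eq_zero (a : En n) (i j : Fin N) (y : En n) :
    ⟪a, mvE (Qmat blk (fun l => a l) i j) y⟫ = 0 := by
  rw [mvE_eq_toEuclideanLin, ← isSymmetric_mvE_Qmat, ← mvE_eq_toEuclideanLin, mvE_Qmat_self,
    inner_zero_left]

end Qmat

theorem expected_step_le {n N : ℕ} (blk : Fin n → Fin N) (f : En n → ℝ) (g : En n → En n)
    (L : Fin N → Fin N → ℝ) (a : En n) (p : Fin N → Fin N → ℝ)
    (hppos : ∀ i j, i ≠ j → 0 < p i j)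
    (hpsum : ∑ q ∈ Finset.univ.filter (fun q : Fin N × Fin N => q.1 < q.2), p q.1 q.2 = 1)
    (Q : Matrix (Fin n) (Fin n) ℝ)
    (hQ : Q = ∑ q ∈ Finset.univ.filter (fun q : Fin N × Fin N => q.1 < q.2),
      (p q.1 q.2 / L q.1 q.2) • Qmat blk (fun l => a l) q.1 q.2)
    {ν₂ : ℝ} (hν₂ : ν₂ ∈ lowerBounds
      {r : ℝ | ∃ y : En n, ⟪a, y⟫ = 0 ∧ ‖y‖ = 1 ∧ r = ⟪y, mvE Q y⟫})
    (hdec : ∀ (x : En n) (i j : Fin N), i ≠ j →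
      f (x - (L i j)⁻¹ • mvE (Qmat blk (fun l => a l) i j) (g x)) ≤
        f x - (2 * L i j)⁻¹ * ⟪g x, mvE (Qmat blk (fun l => a l) i j) (g x)⟫)
    (x : En n) :
    ∑ q ∈ Finset.univ.filter (fun q : Fin N × Fin N => q.1 < q.2),
        p q.1 q.2 * f (x - (L q.1 q.2)⁻¹ • mvE (Qmat blk (fun l => a l) q.1 q.2) (g x)) ≤
      f x - ν₂ / 2 * ‖g x - (⟪a, g x⟫ / ‖a‖ ^ 2) • a‖ ^ 2 := by
  set s := Finset.univ.filter (fun q : Fin N × Fin N => q.1 < q.2)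
  have hQlin : toEuclideanLin Q = ∑ q ∈ s,
      (p q.1 q.2 / L q.1 q.2) • toEuclideanLin (Qmat blk (fun l => a l) q.1 q.2) := by
    rw [hQ, map_sum]
    simp only [map_smul]
  have hQsymm : (toEuclideanLin Q).IsSymmetric := hQlin ▸ LinearMap.isSymmetric_sum s fun q _ =>
    (isSymmetric_mvE_Qmat blk a q.1 q.2).smul (conj_trivial _)
  have hQa : toEuclideanLin Q a = 0 := by
    simp only [hQlin, LinearMap.sum_apply, LinearMap.smul_apply, ← mvE_eq_toEuclideanLin,
      mvE_Qmat_self, smul_zero, sum_const_zero]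
  have hquad : ⟪g x, mvE Q (g x)⟫ = ∑ q ∈ s,
      p q.1 q.2 / L q.1 q.2 * ⟪g x, mvE (Qmat blk (fun l => a l) q.1 q.2) (g x)⟫ := by
    simp only [mvE_eq_toEuclideanLin, hQlin, LinearMap.sum_apply, LinearMap.smul_apply,
      inner_sum, real_inner_smul_right]
  have hperp := mul_norm_sq_perp_le_inner hQsymm hQa hν₂ (g x)
  rw [← mvE_eq_toEuclideanLin] at hperp
  calc ∑ q ∈ s, p q.1 q.2 *
        f (x - (L q.1 q.2)⁻¹ • mvE (Qmat blk (fun l => a l) q.1 q.2) (g x))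
      ≤ ∑ q ∈ s, p q.1 q.2 * (f x - (2 * L q.1 q.2)⁻¹ *
          ⟪g x, mvE (Qmat blk (fun l => a l) q.1 q.2) (g x)⟫) := by
        refine sum_le_sum fun q hq => ?_
        have hne : q.1 ≠ q.2 := (mem_filter.mp hq).2.ne
        exact mul_le_mul_of_nonneg_left (hdec x _ _ hne) (hppos _ _ hne).le
    _ = f x - ⟪g x, mvE Q (g x)⟫ / 2 := by
        simp only [hquad, mul_sub, sum_sub_distrib, ← sum_mul, hpsum, one_mul, sum_div]
        congr 1
        exact sum_congr rfl fun q _ => by ring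
    _ ≤ f x - ν₂ / 2 * ‖g x - (⟪a, g x⟫ / ‖a‖ ^ 2) • a‖ ^ 2 := by linarith

theorem stmt16_general {n N : ℕ} (blk : Fin n → Fin N)
    (f : En n → ℝ) (g : En n → En n)
    (L : Fin N → Fin N → ℝ)
    (a : En n) (b : ℝ)
    (p : Fin N → Fin N → ℝ) (hppos : ∀ i j, i ≠ j → 0 < p i j)
    (hpsum : ∑ q ∈ Finset.univ.filter (fun q : Fin N × Fin N => q.1 < q.2),
      p q.1 q.2 = 1)
    (Q : Matrix (Fin n) (Fin n) ℝ)
    (hQ : Q = ∑ q ∈ Finset.univ.filter (fun q : Fin N × Fin N => q.1 < q.2),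
      (p q.1 q.2 / L q.1 q.2) • Qmat blk (fun l => a l) q.1 q.2)
    -- `ν₂(Q)` : the second smallest eigenvalue of `Q`, characterized as the minimum of
    -- the Rayleigh quotient of `Q` on the unit sphere of the subspace `S = a^⊥`
    (ν₂ : ℝ) (hν₂pos : 0 < ν₂)
    (hν₂ : IsGLB {r : ℝ | ∃ y : En n, ⟪a, y⟫ = 0 ∧ ‖y‖ = 1 ∧ r = ⟪y, mvE Q y⟫} ν₂)
    -- per-step decrease from the 2-block Lipschitz property
    (hdec : ∀ (x : En n) (i j : Fin N), i ≠ j →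
      f (x - (L i j)⁻¹ • mvE (Qmat blk (fun l => a l) i j) (g x)) ≤
        f x - (2 * L i j)⁻¹ * ⟪g x, mvE (Qmat blk (fun l => a l) i j) (g x)⟫)
    (fstar : ℝ) (hfstar : IsGLB (f '' {x : En n | ⟪a, x⟫ = b}) fstar)
    -- the trajectories along each realization of the random pairs
    (x0 : En n) (hx0 : ⟪a, x0⟫ = b)
    (X : (k : ℕ) → (Fin k → {q : Fin N × Fin N // q.1 < q.2}) → En n)
    (hX0 : ∀ w, X 0 w = x0)
    (hXs : ∀ k (w : Fin (k + 1) → {q : Fin N × Fin N // q.1 < q.2}),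
      X (k + 1) w = X k (fun t => w t.castSucc) -
        (L (w (Fin.last k)).1.1 (w (Fin.last k)).1.2)⁻¹ •
          mvE (Qmat blk (fun l => a l) (w (Fin.last k)).1.1 (w (Fin.last k)).1.2)
            (g (X k (fun t => w t.castSucc)))) :
    (∀ x : En n, ⟪a, x⟫ = b →
      ∑ q ∈ Finset.univ.filter (fun q : Fin N × Fin N => q.1 < q.2),
          p q.1 q.2 * f (x - (L q.1 q.2)⁻¹ • mvE (Qmat blk (fun l => a l) q.1 q.2) (g x)) ≤
        f x - ν₂ / 2 * ‖g x - (⟪a, g x⟫ / ‖a‖ ^ 2) • a‖ ^ 2) ∧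
    (∀ k : ℕ, ∃ l ≤ k,
      (∑ w : Fin l → {q : Fin N × Fin N // q.1 < q.2},
          (∏ t, p (w t).1.1 (w t).1.2) *
            ‖g (X l w) - (⟪a, g (X l w)⟫ / ‖a‖ ^ 2) • a‖ ^ 2) ≤
        2 * (f x0 - fstar) / (ν₂ * (k + 1))) := by
  have hstep := expected_step_le blk f g L a p hppos hpsum Q hQ hν₂.1 hdec
  refine ⟨fun x _ => hstep x, fun k => ?_⟩
  have hsub (F : Fin N × Fin N → ℝ) : ∑ q ∈ univ.filter (fun q : Fin N × Fin N => q.1 < q.2),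
      F q = ∑ q : {q : Fin N × Fin N // q.1 < q.2}, F q.1 := sum_subtype _ (by simp) F
  have hp0 (q : {q : Fin N × Fin N // q.1 < q.2}) : 0 ≤ p q.1.1 q.1.2 := (hppos _ _ q.2.ne).le
  have hp1 := (hsub _).symm.trans hpsum
  let step (q : {q : Fin N × Fin N // q.1 < q.2}) (x : En n) : En n :=
    x - (L q.1.1 q.1.2)⁻¹ • mvE (Qmat blk (fun l => a l) q.1.1 q.1.2) (g x)
  have hfeas := path_mem_of_mapsTo (step := step) hXs (C := {x | ⟪a, x⟫ = b})
    (fun q x hx => by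
      simpa only [step, Set.mem_ofPred_eq, inner_sub_right, real_inner_smul_right,
        inner_mvE_Qmat_eq_zero, mul_zero, sub_zero] using hx)
    (fun w => hX0 w ▸ hx0)
  have hdesc := pathMean_succ_le _ (step := step) hXs hp0 f
    (fun x => ‖g x - (⟪a, g x⟫ / ‖a‖ ^ 2) • a‖ ^ 2) (ν₂ / 2)
    fun x => by simpa only [hsub] using hstep x
  have hbdd l := le_pathMean _ hp0 hp1 fun w => hfstar.1 ⟨X l w, hfeas l w, rfl⟩
  have hrate := exists_le_of_descent hν₂pos hdesc hbdd k
  rw [pathMean_zero, hX0] at hrate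
  exact hrate

/-- For the 2-random coordinate descent method with pair probabilities
`p_{ij}` applied to `min {f(x) : aᵀx = b}` with smooth `f` (`h = 0`), one step
(`x⁺ = x − (1/L_{ij}) Q_{ij} ∇f(x)` with pair `(i,j)` drawn with probability `p_{ij}`)
satisfies `E[f(x⁺) | x] ≤ f(x) − (ν₂(Q)/2)‖∇f(x)_⊥‖²`, where `∇f(x)_⊥` is the orthogonal
projection of `∇f(x)` onto `S = {s : aᵀs = 0}`, `Q = ∑_{i<j} (p_{ij}/L_{ij}) Q_{ij}`, and
`ν₂(Q)` is the second smallest eigenvalue of `Q` (the minimum of the Rayleigh quotient of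
`Q` over the unit sphere of `a^⊥`, which is positive since `0` is a simple eigenvalue of
`Q` with eigenvector `a`).  Consequently
`min_{0 ≤ l ≤ k} E[‖∇f(x^l)_⊥‖²] ≤ 2 (f(x⁰) − f*)/(ν₂(Q)(k+1))`. -/
theorem stmt16 {n N : ℕ} (hN : 2 ≤ N) (blk : Fin n → Fin N)
    (f : En n → ℝ) (g : En n → En n) (hg : ∀ x, HasGradientAt f (g x) x)
    (L : Fin N → Fin N → ℝ) (hLpos : ∀ i j, 0 < L i j) (hLsym : ∀ i j, L i j = L j i)
    (hlip : ∀ (i j : Fin N), i ≠ j → ∀ (y s : En n),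
      (∀ l, blk l ≠ i → blk l ≠ j → s l = 0) →
      ‖(blockProj blk i (g (y + s)) + blockProj blk j (g (y + s))) -
        (blockProj blk i (g y) + blockProj blk j (g y))‖ ≤ L i j * ‖s‖)
    (a : En n) (ha : a ≠ 0) (b : ℝ)
    (p : Fin N → Fin N → ℝ) (hppos : ∀ i j, i ≠ j → 0 < p i j)
    (hpsym : ∀ i j, p i j = p j i)
    (hpsum : ∑ q ∈ Finset.univ.filter (fun q : Fin N × Fin N => q.1 < q.2),
      p q.1 q.2 = 1)
    (Q : Matrix (Fin n) (Fin n) ℝ)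
    (hQ : Q = ∑ q ∈ Finset.univ.filter (fun q : Fin N × Fin N => q.1 < q.2),
      (p q.1 q.2 / L q.1 q.2) • Qmat blk (fun l => a l) q.1 q.2)
    -- `ν₂(Q)` : the second smallest eigenvalue of `Q`, characterized as the minimum of
    -- the Rayleigh quotient of `Q` on the unit sphere of the subspace `S = a^⊥`
    (ν₂ : ℝ) (hν₂pos : 0 < ν₂)
    (hν₂ : IsGLB {r : ℝ | ∃ y : En n, ⟪a, y⟫ = 0 ∧ ‖y‖ = 1 ∧ r = ⟪y, mvE Q y⟫} ν₂)
    -- per-step decrease from the 2-block Lipschitz property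
    (hdec : ∀ (x : En n) (i j : Fin N), i ≠ j →
      f (x - (L i j)⁻¹ • mvE (Qmat blk (fun l => a l) i j) (g x)) ≤
        f x - (2 * L i j)⁻¹ * ⟪g x, mvE (Qmat blk (fun l => a l) i j) (g x)⟫)
    (fstar : ℝ) (hfstar : IsGLB (f '' {x : En n | ⟪a, x⟫ = b}) fstar)
    -- the trajectories along each realization of the random pairs
    (x0 : En n) (hx0 : ⟪a, x0⟫ = b)
    (X : (k : ℕ) → (Fin k → {q : Fin N × Fin N // q.1 < q.2}) → En n)
    (hX0 : ∀ w, X 0 w = x0)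
    (hXs : ∀ k (w : Fin (k + 1) → {q : Fin N × Fin N // q.1 < q.2}),
      X (k + 1) w = X k (fun t => w t.castSucc) -
        (L (w (Fin.last k)).1.1 (w (Fin.last k)).1.2)⁻¹ •
          mvE (Qmat blk (fun l => a l) (w (Fin.last k)).1.1 (w (Fin.last k)).1.2)
            (g (X k (fun t => w t.castSucc)))) :
    (∀ x : En n, ⟪a, x⟫ = b →
      ∑ q ∈ Finset.univ.filter (fun q : Fin N × Fin N => q.1 < q.2),
          p q.1 q.2 * f (x - (L q.1 q.2)⁻¹ • mvE (Qmat blk (fun l => a l) q.1 q.2) (g x)) ≤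
        f x - ν₂ / 2 * ‖g x - (⟪a, g x⟫ / ‖a‖ ^ 2) • a‖ ^ 2) ∧
    (∀ k : ℕ, ∃ l ≤ k,
      (∑ w : Fin l → {q : Fin N × Fin N // q.1 < q.2},
          (∏ t, p (w t).1.1 (w t).1.2) *
            ‖g (X l w) - (⟪a, g (X l w)⟫ / ‖a‖ ^ 2) • a‖ ^ 2) ≤
        2 * (f x0 - fstar) / (ν₂ * (k + 1))) :=
  stmt16_general blk f g L a b p hppos hpsum Q hQ ν₂ hν₂pos hν₂ hdec fstar hfstar x0 hx0 X hX0 hXs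
end
end

section
/- (Asymptotic convergence of 1-RCD) Under the block Lipschitz and convex-separable assumptions with uniform block selection, the sequence generated by the 1-random coordinate descent method satisfies: the random variables M_1(x^k, L) converge to 0 almost surely, F(x^k) converges almost surely to some random variable F̄, and every accumulation point of (x^k) is a stationary point of min_x f(x) + h(x). -/
/-!
A block step never increases `F = f + h` (block descent lemma), and the average of `F` over the
`N` possible block steps from `x` is at most `F x - ‖d_L(x)‖_L² / (2N)`: the `i`-th block of
`d_L(x)` is an admissible `i`-th block step, these blocks add up to `d_L(x)`, and by convexity the
minimum of the full model `ψ_L(·; x)` lies below `F x` by at least `‖d_L(x)‖_L² / 2`. Hence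
`𝔼 F(x^{k+1}) ≤ 𝔼 F(x^k) - 𝔼 ‖d_L(x^k)‖_L² / (2N)`, and as `F` is bounded below the series
`∑ₖ 𝔼 ‖d_L(x^k)‖_L²` converges, so `‖d_L(x^k)‖_L → 0` almost surely. Along every path `F(x^k)` is
nonincreasing and bounded below, hence convergent.

At a cluster point `x̄` of a path with `d_L(x^k) → 0`, the blocks of `d_L(x^k)` tend to `0` and are
optimal block steps, so in the limit `h x̄ ≤ ⟪∇f x̄, s⟫ + (3/2) L_i ‖s‖² + h (x̄ + s)` for every
direction `s` in block `i`. Applied to `t • s` with `t → 0`, convexity of `h` removes the quadratic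
term, and separability of `h` sums the blocks up to `-∇f x̄ ∈ ∂h x̄`.
-/

open scoped BigOperators RealInnerProductSpace
open Finset Filter

noncomputable section

/-- `gh` is a subgradient of the convex function `h` at `x`. -/
def IsSubgradientAt {n : ℕ} (h : En n → ℝ) (gh x : En n) : Prop :=
  ∀ y, h x + ⟪gh, y - x⟫ ≤ h y

open MeasureTheory ProbabilityTheory
open scoped ENNReal

def BlockSupported {n N : ℕ} (blk : Fin n → Fin N) (i : Fin N) (s : En n) : Prop :=
  ∀ j, blk j ≠ i → s j = 0

section Blocks

variable {n N : ℕ} {blk : Fin n → Fin N} {i k : Fin N} {s : En n}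

lemma blockProj_apply (y : En n) (j : Fin n) :
    blockProj blk i y j = if blk j = i then y j else 0 := rfl

lemma blockProj_add (x y : En n) :
    blockProj blk i (x + y) = blockProj blk i x + blockProj blk i y := by
  ext j; by_cases hj : blk j = i <;> simp [blockProj_apply, hj]

lemma blockProj_sub (x y : En n) :
    blockProj blk i (x - y) = blockProj blk i x - blockProj blk i y := by
  ext j; by_cases hj : blk j = i <;> simp [blockProj_apply, hj]

lemma blockProj_smul (c : ℝ) (x : En n) :
    blockProj blk i (c • x) = c • blockProj blk i x := by
  ext j; by_cases hj : blk j = i <;> simp [blockProj_apply, hj]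

lemma blockSupported_blockProj (y : En n) : BlockSupported blk i (blockProj blk i y) :=
  fun j hj => by simp [blockProj_apply, hj]

lemma sum_blockProj (x : En n) : ∑ i, blockProj blk i x = x := by
  ext j
  rw [WithLp.ofLp_sum, Finset.sum_apply, Finset.sum_eq_single (blk j)] <;>
    simp +contextual [blockProj_apply, eq_comm]

lemma inner_blockProj_left (a b : En n) :
    ⟪blockProj blk i a, b⟫ = ⟪a, blockProj blk i b⟫ := by
  simp only [PiLp.inner_apply, blockProj_apply]
  refine Finset.sum_congr rfl fun j _ => ?_
  split_ifs <;> simp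

namespace BlockSupported

lemma smul (hs : BlockSupported blk i s) (c : ℝ) : BlockSupported blk i (c • s) :=
  fun j hj => by simp [hs j hj]

lemma sub {u : En n} (hs : BlockSupported blk i s) (hu : BlockSupported blk i u) :
    BlockSupported blk i (s - u) :=
  fun j hj => by simp [hs j hj, hu j hj]

lemma blockProj_eq (hs : BlockSupported blk i s) : blockProj blk i s = s := by
  ext j; by_cases hj : blk j = i <;> simp [blockProj_apply, hj, hs j]

lemma blockProj_of_ne (hs : BlockSupported blk i s) (hk : k ≠ i) : blockProj blk k s = 0 := by
  ext j; by_cases hj : blk j = k <;> simp [blockProj_apply, hj, hs j, hk]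

lemma inner_eq (hs : BlockSupported blk i s) (a : En n) :
    ⟪a, s⟫ = ⟪blockProj blk i a, s⟫ := by
  rw [inner_blockProj_left, hs.blockProj_eq]

end BlockSupported

lemma blockNormSq_nonneg {L : Fin N → ℝ} (hL : ∀ i, 0 < L i) (x : En n) :
    0 ≤ blockNormSq blk L x :=
  Finset.sum_nonneg fun i _ => by have := hL i; positivity

lemma blockNormSq_smul (L : Fin N → ℝ) (c : ℝ) (x : En n) :
    blockNormSq blk L (c • x) = c ^ 2 * blockNormSq blk L x := by
  simp only [blockNormSq, Finset.mul_sum, blockProj_smul, norm_smul, Real.norm_eq_abs, mul_pow,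
    sq_abs]
  exact Finset.sum_congr rfl fun _ _ => by ring

lemma mul_sq_norm_blockProj_le_blockNormSq {L : Fin N → ℝ} (hL : ∀ i, 0 < L i) (x : En n) :
    L i * ‖blockProj blk i x‖ ^ 2 ≤ blockNormSq blk L x :=
  Finset.single_le_sum (f := fun k => L k * ‖blockProj blk k x‖ ^ 2)
    (fun k _ => by have := hL k; positivity) (Finset.mem_univ i)

lemma blockNormSq_sub_blockProj_add (L : Fin N → ℝ) (v : En n) (hs : BlockSupported blk i s) :
    blockNormSq blk L (v - blockProj blk i v + s)
      = blockNormSq blk L v - L i * ‖blockProj blk i v‖ ^ 2 + L i * ‖s‖ ^ 2 := by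
  have hblock : ∀ k, blockProj blk k (v - blockProj blk i v + s)
      = if k = i then s else blockProj blk k v := by
    intro k
    rw [blockProj_add, blockProj_sub]
    by_cases hk : k = i
    · subst hk; simp [(blockSupported_blockProj v).blockProj_eq, hs.blockProj_eq]
    · simp [hs.blockProj_of_ne hk, (blockSupported_blockProj v).blockProj_of_ne hk, hk]
  have hterm : ∀ k, L k * ‖blockProj blk k (v - blockProj blk i v + s)‖ ^ 2
      = L k * ‖blockProj blk k v‖ ^ 2
        + if k = i then L i * ‖s‖ ^ 2 - L i * ‖blockProj blk i v‖ ^ 2 else 0 := by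
    intro k
    rw [hblock]; split_ifs with hk
    · subst hk; ring
    · ring
  simp only [blockNormSq, hterm, Finset.sum_add_distrib, Finset.sum_ite_eq', Finset.mem_univ,
    if_true]
  ring

end Blocks

section Separable

variable {n N : ℕ} {blk : Fin n → Fin N} {h : En n → ℝ} {H : Fin N → En n → ℝ}

lemma sub_eq_of_blockSupported (hsep : ∀ x, h x = ∑ k, H k (blockProj blk k x)) (x : En n)
    {i : Fin N} {s : En n} (hs : BlockSupported blk i s) :
    h (x + s) - h x = H i (blockProj blk i x + s) - H i (blockProj blk i x) := by
  rw [hsep, hsep, ← Finset.sum_sub_distrib, Finset.sum_eq_single i]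
  · rw [blockProj_add, hs.blockProj_eq]
  · intro k _ hk
    rw [blockProj_add, hs.blockProj_of_ne hk, add_zero, sub_self]
  · simp

lemma sum_sub_blockProj (hsep : ∀ x, h x = ∑ k, H k (blockProj blk k x)) (x s : En n) :
    ∑ i, (h (x + blockProj blk i s) - h x) = h (x + s) - h x := by
  simp only [sub_eq_of_blockSupported hsep x (blockSupported_blockProj s)]
  rw [hsep (x + s), hsep x, ← Finset.sum_sub_distrib]
  simp only [blockProj_add]

lemma convexOn_of_separable (hHconv : ∀ k, ConvexOn ℝ Set.univ (H k))
    (hsep : ∀ x, h x = ∑ k, H k (blockProj blk k x)) :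
    ConvexOn ℝ Set.univ h := by
  have hblock : ∀ k, ConvexOn ℝ Set.univ fun x => H k (blockProj blk k x) := fun k =>
    (hHconv k).comp_linearMap ⟨⟨blockProj blk k, blockProj_add⟩, blockProj_smul⟩
  have hsum : ConvexOn ℝ Set.univ (∑ k, fun x => H k (blockProj blk k x)) :=
    Finset.sum_induction _ (ConvexOn ℝ Set.univ) (fun _ _ => ConvexOn.add)
      (convexOn_const 0 convex_univ) fun k _ => hblock k
  exact hsum.congr fun x _ => by rw [hsep, Finset.sum_apply]

end Separable

section Descent

variable {E : Type*} [NormedAddCommGroup E] [InnerProductSpace ℝ E] [CompleteSpace E]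
  {f : E → ℝ} {g : E → E}

lemma abs_sub_sub_inner_le_of_inner_sub_le (hg : ∀ x, HasGradientAt f (g x) x) (x s : E)
    {K : ℝ} (hK : ∀ t ∈ Set.Ico (0 : ℝ) 1, |⟪g (x + t • s) - g x, s⟫| ≤ K * t) :
    |f (x + s) - f x - ⟪g x, s⟫| ≤ K / 2 := by
  have hφ : ∀ t : ℝ, HasDerivAt (fun t : ℝ => f (x + t • s) - f x - t * ⟪g x, s⟫)
      (⟪g (x + t • s) - g x, s⟫) t := by
    intro t
    have hline : HasDerivAt (fun t : ℝ => x + t • s) s t := by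
      simpa using ((hasDerivAt_id t).smul_const s).const_add x
    refine ((((hg (x + t • s)).hasFDerivAt.comp_hasDerivAt t hline).sub_const (f x)).sub
      ((hasDerivAt_id t).mul_const ⟪g x, s⟫)).congr_deriv ?_
    simp [InnerProductSpace.toDual_apply_apply, inner_sub_left]
  have hB : ∀ t : ℝ, HasDerivAt (fun t : ℝ => K / 2 * t ^ 2) (K * t) t := fun t =>
    ((hasDerivAt_pow 2 t).const_mul (K / 2)).congr_deriv (by ring)
  simpa using image_norm_le_of_norm_deriv_right_le_deriv_boundary
    (fun t _ => (hφ t).continuousAt.continuousWithinAt) (fun t _ => (hφ t).hasDerivWithinAt)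
    (by simp) hB hK (Set.right_mem_Icc.2 zero_le_one)

end Descent

section Convex

lemma le_of_forall_mem_Ioo_le_add_mul {a b c : ℝ} (h : ∀ t ∈ Set.Ioo (0 : ℝ) 1, a ≤ b + t * c) :
    a ≤ b := by
  have hlim : Tendsto (fun t : ℝ => b + t * c) (nhdsWithin 0 (Set.Ioi 0)) (nhds b) :=
    ((by fun_prop : Continuous fun t : ℝ => b + t * c).tendsto' 0 b (by simp)).mono_left
      nhdsWithin_le_nhds
  exact ge_of_tendsto hlim (Filter.mem_of_superset (Ioo_mem_nhdsGT one_pos) h)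

variable {E : Type*} [AddCommGroup E] [Module ℝ E] {φ : E → ℝ}

lemma ConvexOn.add_le_sub_of_forall_le (hφ : ConvexOn ℝ Set.univ φ) {ℓ Q : E → ℝ}
    (hℓ : ∀ (c : ℝ) v, ℓ (c • v) = c * ℓ v) (hQ : ∀ (c : ℝ) v, Q (c • v) = c ^ 2 * Q v) {v : E}
    (hv : ∀ s, ℓ v + Q v / 2 + φ v ≤ ℓ s + Q s / 2 + φ s) :
    ℓ v + Q v / 2 + φ v ≤ φ 0 - Q v / 2 := by
  -- Compare `v` with `(1 - t) • v` and let `t → 0`.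
  refine le_of_forall_mem_Ioo_le_add_mul (c := Q v / 2) fun t ⟨ht0, ht1⟩ => ?_
  have hconv : φ ((1 - t) • v) ≤ (1 - t) * φ v + t * φ 0 := by
    simpa using hφ.2 (Set.mem_univ v) (Set.mem_univ 0) (by linarith) ht0.le (by ring)
  have hcmp := hv ((1 - t) • v)
  rw [hℓ, hQ] at hcmp
  have : t * (ℓ v + Q v / 2 + φ v) ≤ t * (φ 0 - Q v / 2 + t * (Q v / 2)) := by nlinarith
  exact le_of_mul_le_mul_left this ht0

lemma ConvexOn.apply_zero_le_add_of_forall_mem_Ioo (hφ : ConvexOn ℝ Set.univ φ) {s : E}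
    {c C : ℝ} (h : ∀ t ∈ Set.Ioo (0 : ℝ) 1, φ 0 ≤ t * c + t ^ 2 * C + φ (t • s)) :
    φ 0 ≤ c + φ s := by
  refine le_of_forall_mem_Ioo_le_add_mul (c := C) fun t ⟨ht0, ht1⟩ => ?_
  have hconv : φ (t • s) ≤ (1 - t) * φ 0 + t * φ s := by
    simpa using hφ.2 (Set.mem_univ 0) (Set.mem_univ s) (by linarith) ht0.le (by ring)
  have : t * φ 0 ≤ t * (c + φ s + t * C) := by nlinarith [h t ⟨ht0, ht1⟩]
  exact le_of_mul_le_mul_left this ht0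

end Convex

section BlockDescent

variable {n N : ℕ} {blk : Fin n → Fin N} {L : Fin N → ℝ} {f h : En n → ℝ} {g : En n → En n}
  (hg : ∀ x, HasGradientAt f (g x) x)
  (hlip : ∀ (i : Fin N) (x s : En n), BlockSupported blk i s →
    ‖blockProj blk i (g (x + s)) - blockProj blk i (g x)‖ ≤ L i * ‖s‖)
include hg hlip

lemma abs_sub_sub_inner_le_of_blockSupported (x : En n) {i : Fin N} {s : En n}
    (hs : BlockSupported blk i s) :
    |f (x + s) - f x - ⟪g x, s⟫| ≤ L i / 2 * ‖s‖ ^ 2 := by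
  have hK : ∀ t ∈ Set.Ico (0 : ℝ) 1, |⟪g (x + t • s) - g x, s⟫| ≤ L i * ‖s‖ ^ 2 * t := by
    intro t ⟨ht, _⟩
    calc |⟪g (x + t • s) - g x, s⟫|
        = |⟪blockProj blk i (g (x + t • s)) - blockProj blk i (g x), s⟫| := by
          rw [hs.inner_eq, blockProj_sub]
      _ ≤ ‖blockProj blk i (g (x + t • s)) - blockProj blk i (g x)‖ * ‖s‖ :=
          abs_real_inner_le_norm _ _
      _ ≤ L i * ‖t • s‖ * ‖s‖ := by gcongr; exact hlip i x _ (hs.smul t)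
      _ = L i * ‖s‖ ^ 2 * t := by rw [norm_smul, Real.norm_of_nonneg ht]; ring
  simpa [mul_div_right_comm] using abs_sub_sub_inner_le_of_inner_sub_le hg x s hK

lemma add_le_of_blockModel_le (x : En n) {i : Fin N} {u s : En n} (hu : BlockSupported blk i u)
    (hmin : ⟪g x, u⟫ + L i / 2 * ‖u‖ ^ 2 + h (x + u) ≤ ⟪g x, s⟫ + L i / 2 * ‖s‖ ^ 2 + h (x + s)) :
    f (x + u) + h (x + u) ≤ f x + ⟪g x, s⟫ + L i / 2 * ‖s‖ ^ 2 + h (x + s) := by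
  linarith [(abs_le.mp (abs_sub_sub_inner_le_of_blockSupported hg hlip x hu)).2]

end BlockDescent

section ProxGradient

variable {n N : ℕ} {blk : Fin n → Fin N} {L : Fin N → ℝ} {f h : En n → ℝ} {g : En n → En n}
  {H : Fin N → En n → ℝ} {dL : En n → En n}

-- Replacing block `i` of `dL x` by `s` gives a competitor in the full model whose cost differs
-- from that of `dL x` only in block `i`.
lemma blockModel_blockProj_dL_le (hsep : ∀ x, h x = ∑ k, H k (blockProj blk k x))
    (hdL : ∀ x s : En n,
      f x + ⟪g x, dL x⟫ + (1 / 2) * blockNormSq blk L (dL x) + h (x + dL x) ≤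
      f x + ⟪g x, s⟫ + (1 / 2) * blockNormSq blk L s + h (x + s))
    (x : En n) {i : Fin N} {s : En n} (hs : BlockSupported blk i s) :
    ⟪g x, blockProj blk i (dL x)⟫ + L i / 2 * ‖blockProj blk i (dL x)‖ ^ 2
        + h (x + blockProj blk i (dL x))
      ≤ ⟪g x, s⟫ + L i / 2 * ‖s‖ ^ 2 + h (x + s) := by
  set v := dL x
  set u := blockProj blk i v
  have hu : BlockSupported blk i u := blockSupported_blockProj v
  have hinner : ⟪g x, v - u + s⟫ = ⟪g x, v⟫ - ⟪g x, u⟫ + ⟪g x, s⟫ := by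
    rw [inner_add_right, inner_sub_right]
  have hh : h (x + (v - u + s)) = h (x + v) + h (x + s) - h (x + u) := by
    have hv := sub_eq_of_blockSupported hsep (x + v) (hs.sub hu)
    rw [blockProj_add, add_add_sub_cancel] at hv
    have hxs := sub_eq_of_blockSupported hsep x hs
    have hxu := sub_eq_of_blockSupported hsep x hu
    rw [show x + (v - u + s) = x + v + (s - u) by abel]
    linarith
  have hcmp := hdL x (v - u + s)
  rw [hinner, blockNormSq_sub_blockProj_add L v hs, hh] at hcmp
  linarith

lemma dL_model_le (hHconv : ∀ k, ConvexOn ℝ Set.univ (H k))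
    (hsep : ∀ x, h x = ∑ k, H k (blockProj blk k x))
    (hdL : ∀ x s : En n,
      f x + ⟪g x, dL x⟫ + (1 / 2) * blockNormSq blk L (dL x) + h (x + dL x) ≤
      f x + ⟪g x, s⟫ + (1 / 2) * blockNormSq blk L s + h (x + s))
    (x : En n) :
    ⟪g x, dL x⟫ + blockNormSq blk L (dL x) / 2 + h (x + dL x)
      ≤ h x - blockNormSq blk L (dL x) / 2 := by
  have hφ : ConvexOn ℝ Set.univ fun s => h (x + s) :=
    (convexOn_of_separable hHconv hsep).translate_right x
  simpa using hφ.add_le_sub_of_forall_le (fun c v => real_inner_smul_right (g x) v c)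
    (blockNormSq_smul L) fun s => by linarith [hdL x s]

end ProxGradient

section RCDStep

variable {n N : ℕ} {blk : Fin n → Fin N} {L : Fin N → ℝ} {f h : En n → ℝ} {g : En n → En n}
  {d : En n → Fin N → En n}
  (hg : ∀ x, HasGradientAt f (g x) x)
  (hlip : ∀ (i : Fin N) (x s : En n), BlockSupported blk i s →
    ‖blockProj blk i (g (x + s)) - blockProj blk i (g x)‖ ≤ L i * ‖s‖)
  (hdsupp : ∀ x i, BlockSupported blk i (d x i))
  (hdmin : ∀ (x : En n) (i : Fin N) (s : En n), BlockSupported blk i s →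
    f x + ⟪g x, d x i⟫ + L i / 2 * ‖d x i‖ ^ 2 + h (x + d x i) ≤
    f x + ⟪g x, s⟫ + L i / 2 * ‖s‖ ^ 2 + h (x + s))
include hg hlip hdsupp hdmin

lemma add_step_le (x : En n) (i : Fin N) : f (x + d x i) + h (x + d x i) ≤ f x + h x := by
  simpa using add_le_of_blockModel_le (s := 0) hg hlip x (hdsupp x i)
    (by linarith [hdmin x i 0 fun _ _ => rfl])

lemma sum_add_step_le {H : Fin N → En n → ℝ} {dL : En n → En n}
    (hHconv : ∀ k, ConvexOn ℝ Set.univ (H k)) (hsep : ∀ x, h x = ∑ k, H k (blockProj blk k x))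
    (hdL : ∀ x s : En n,
      f x + ⟪g x, dL x⟫ + (1 / 2) * blockNormSq blk L (dL x) + h (x + dL x) ≤
      f x + ⟪g x, s⟫ + (1 / 2) * blockNormSq blk L s + h (x + s))
    (x : En n) :
    ∑ i, (f (x + d x i) + h (x + d x i)) ≤ N * (f x + h x) - blockNormSq blk L (dL x) / 2 := by
  set u := fun i => blockProj blk i (dL x)
  have hstep : ∀ i, f (x + d x i) + h (x + d x i)
      ≤ f x + ⟪g x, u i⟫ + L i / 2 * ‖u i‖ ^ 2 + h (x + u i) := fun i =>
    add_le_of_blockModel_le hg hlip x (hdsupp x i)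
      (by linarith [hdmin x i (u i) (blockSupported_blockProj _)])
  have hinner : ∑ i, ⟪g x, u i⟫ = ⟪g x, dL x⟫ := by rw [← inner_sum, sum_blockProj]
  have hnorm : ∑ i, L i / 2 * ‖u i‖ ^ 2 = blockNormSq blk L (dL x) / 2 := by
    rw [blockNormSq, Finset.sum_div]
    exact Finset.sum_congr rfl fun i _ => by ring
  have hsep_sum : ∑ i, h (x + u i) = N * h x + (h (x + dL x) - h x) := by
    rw [← sum_sub_blockProj hsep x (dL x), Finset.sum_sub_distrib]
    simp [u]
  have hgap := dL_model_le hHconv hsep hdL x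
  calc ∑ i, (f (x + d x i) + h (x + d x i))
      ≤ ∑ i, (f x + ⟪g x, u i⟫ + L i / 2 * ‖u i‖ ^ 2 + h (x + u i)) :=
        Finset.sum_le_sum fun i _ => hstep i
    _ = N * f x + ⟪g x, dL x⟫ + blockNormSq blk L (dL x) / 2 + ∑ i, h (x + u i) := by
        simp only [Finset.sum_add_distrib, hinner, hnorm]
        simp
    _ ≤ N * (f x + h x) - blockNormSq blk L (dL x) / 2 := by linarith

end RCDStep

section Stationarity

variable {n N : ℕ} {blk : Fin n → Fin N} {L : Fin N → ℝ} {f h : En n → ℝ} {g : En n → En n}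
  {H : Fin N → En n → ℝ} {dL : En n → En n}

lemma isSubgradientAt_neg_of_forall_blockSupported
    (hsep : ∀ x, h x = ∑ k, H k (blockProj blk k x)) {a x : En n}
    (hblock : ∀ i s, BlockSupported blk i s → h x ≤ ⟪a, s⟫ + h (x + s)) :
    IsSubgradientAt h (-a) x := by
  intro z
  have hsum : ∑ i, -⟪a, blockProj blk i (z - x)⟫ ≤ ∑ i, (h (x + blockProj blk i (z - x)) - h x) :=
    Finset.sum_le_sum fun i _ => by linarith [hblock i _ (blockSupported_blockProj (z - x))]
  rw [sum_sub_blockProj hsep x (z - x), Finset.sum_neg_distrib, ← inner_sum, sum_blockProj,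
    add_sub_cancel] at hsum
  rw [inner_neg_left]
  linarith

lemma tendsto_blockProj_of_tendsto_blockNormSq (hL : ∀ i, 0 < L i) {v : ℕ → En n}
    (hv : Tendsto (fun k => blockNormSq blk L (v k)) atTop (nhds 0)) (i : Fin N) :
    Tendsto (fun k => blockProj blk i (v k)) atTop (nhds 0) := by
  rw [tendsto_zero_iff_norm_tendsto_zero]
  have hsqrt : Tendsto (fun k => √(blockNormSq blk L (v k) / L i)) atTop (nhds 0) := by
    simpa using (hv.div_const (L i)).sqrt
  refine squeeze_zero (fun k => norm_nonneg _) (fun k => ?_) hsqrt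
  rw [Real.le_sqrt (norm_nonneg _) (div_nonneg (blockNormSq_nonneg hL _) (hL i).le),
    le_div_iff₀ (hL i), mul_comm]
  exact mul_sq_norm_blockProj_le_blockNormSq hL (v k)

lemma add_le_add_of_tendsto (hL : ∀ i, 0 < L i) (hg : ∀ x, HasGradientAt f (g x) x)
    (hlip : ∀ (i : Fin N) (x s : En n), BlockSupported blk i s →
      ‖blockProj blk i (g (x + s)) - blockProj blk i (g x)‖ ≤ L i * ‖s‖)
    (hsep : ∀ x, h x = ∑ k, H k (blockProj blk k x)) (hcont : Continuous h)
    (hdL : ∀ x s : En n,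
      f x + ⟪g x, dL x⟫ + (1 / 2) * blockNormSq blk L (dL x) + h (x + dL x) ≤
      f x + ⟪g x, s⟫ + (1 / 2) * blockNormSq blk L s + h (x + s))
    {y : ℕ → En n} {xbar : En n} (hy : Tendsto y atTop (nhds xbar))
    (hv : Tendsto (fun k => blockNormSq blk L (dL (y k))) atTop (nhds 0))
    {i : Fin N} {s : En n} (hs : BlockSupported blk i s) :
    f xbar + h xbar ≤ f (xbar + s) + h (xbar + s) + L i * ‖s‖ ^ 2 := by
  have hΦ : Continuous fun x => f x + h x :=
    (continuous_iff_continuousAt.2 fun x => (hg x).differentiableAt.continuousAt).add hcont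
  have hu := tendsto_blockProj_of_tendsto_blockNormSq hL hv i
  have hle : ∀ k, f (y k + blockProj blk i (dL (y k))) + h (y k + blockProj blk i (dL (y k)))
      ≤ f (y k + s) + h (y k + s) + L i * ‖s‖ ^ 2 := fun k => by
    have hstep := add_le_of_blockModel_le hg hlip (y k) (blockSupported_blockProj _)
      (blockModel_blockProj_dL_le hsep hdL (y k) hs)
    linarith [(abs_le.mp (abs_sub_sub_inner_le_of_blockSupported hg hlip (y k) hs)).1]
  have hlhs : Tendsto (fun k => f (y k + blockProj blk i (dL (y k)))
      + h (y k + blockProj blk i (dL (y k)))) atTop (nhds (f xbar + h xbar)) :=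
    (hΦ.tendsto xbar).comp (by simpa using hy.add hu)
  exact le_of_tendsto_of_tendsto' hlhs
    (((hΦ.tendsto (xbar + s)).comp (hy.add_const s)).add_const _) hle

lemma exists_subgradient_of_mapClusterPt (hL : ∀ i, 0 < L i)
    (hg : ∀ x, HasGradientAt f (g x) x)
    (hlip : ∀ (i : Fin N) (x s : En n), BlockSupported blk i s →
      ‖blockProj blk i (g (x + s)) - blockProj blk i (g x)‖ ≤ L i * ‖s‖)
    (hHconv : ∀ k, ConvexOn ℝ Set.univ (H k))
    (hsep : ∀ x, h x = ∑ k, H k (blockProj blk k x)) (hcont : Continuous h)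
    (hdL : ∀ x s : En n,
      f x + ⟪g x, dL x⟫ + (1 / 2) * blockNormSq blk L (dL x) + h (x + dL x) ≤
      f x + ⟪g x, s⟫ + (1 / 2) * blockNormSq blk L s + h (x + s))
    {y : ℕ → En n} (hv : Tendsto (fun k => blockNormSq blk L (dL (y k))) atTop (nhds 0))
    {xbar : En n} (hcl : MapClusterPt xbar atTop y) :
    ∃ gh : En n, IsSubgradientAt h gh xbar ∧ g xbar + gh = 0 := by
  obtain ⟨φ, hφ, hyφ⟩ := hcl.tendsto_subseq
  have hvφ := hv.comp hφ.tendsto_atTop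
  have hconv : ConvexOn ℝ Set.univ fun s => h (xbar + s) :=
    (convexOn_of_separable hHconv hsep).translate_right xbar
  refine ⟨-g xbar, isSubgradientAt_neg_of_forall_blockSupported hsep fun i s hs => ?_,
    add_neg_cancel _⟩
  -- Along `t • s` the quadratic error `(3 / 2) L i ‖t • s‖ ^ 2` is `o(t)`.
  simpa using hconv.apply_zero_le_add_of_forall_mem_Ioo (C := 3 / 2 * L i * ‖s‖ ^ 2)
    fun t ⟨ht, _⟩ => by
      have hlim := add_le_add_of_tendsto hL hg hlip hsep hcont hdL hyφ hvφ (hs.smul t)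
      have hdesc := (abs_le.mp (abs_sub_sub_inner_le_of_blockSupported hg hlip xbar
        (hs.smul t))).2
      rw [norm_smul, Real.norm_of_nonneg ht.le] at hlim hdesc
      rw [real_inner_smul_right] at hdesc
      simp only [add_zero]
      nlinarith

end Stationarity

section WordIter

variable {α : Type*} {N : ℕ} (T : α → Fin N → α) (x0 : α)

-- Expectations over i.i.d. uniform block choices are finite averages over the words
-- `w : Fin k → Fin N` of choices: the iterate is `wordIter T x0 k (I · ω)`, and `iterMean T x0 Φ k`
-- is the expectation of `Φ` at the `k`-th iterate.
def wordIter : (k : ℕ) → (Fin k → Fin N) → α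
  | 0, _ => x0
  | k + 1, w => T (wordIter k (Fin.init w)) (w (Fin.last k))

def iterMean (Φ : α → ℝ) (k : ℕ) : ℝ :=
  (N : ℝ)⁻¹ ^ k * ∑ w : Fin k → Fin N, Φ (wordIter T x0 k w)

variable {T x0}

lemma eq_wordIter {X : ℕ → α} {w : ℕ → Fin N} (h0 : X 0 = x0)
    (hs : ∀ k, X (k + 1) = T (X k) (w k)) (k : ℕ) :
    X k = wordIter T x0 k fun j => w j := by
  induction k with
  | zero => exact h0
  | succ k ih => rw [hs, ih]; rfl

lemma sum_wordIter_succ {M : Type*} [AddCommMonoid M] (Φ : α → M) (k : ℕ) :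
    ∑ w, Φ (wordIter T x0 (k + 1) w) = ∑ w, ∑ i, Φ (T (wordIter T x0 k w) i) := by
  rw [← (Fin.snocEquiv fun _ => Fin N).sum_comp, Fintype.sum_prod_type, Finset.sum_comm]
  simp [Fin.snocEquiv, wordIter]

lemma le_iterMean (hN : 0 < N) {Φ : α → ℝ} {c : ℝ} (hc : ∀ x, c ≤ Φ x) (k : ℕ) :
    c ≤ iterMean T x0 Φ k := by
  have hsum := Finset.card_nsmul_le_sum Finset.univ (fun w => Φ (wordIter T x0 k w)) c
    fun w _ => hc _
  simp only [Finset.card_univ, Fintype.card_fun, Fintype.card_fin, nsmul_eq_mul,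
    Nat.cast_pow] at hsum
  calc c = (N : ℝ)⁻¹ ^ k * ((N : ℝ) ^ k * c) := by
        rw [← mul_assoc, ← mul_pow, inv_mul_cancel₀ (by positivity), one_pow, one_mul]
    _ ≤ iterMean T x0 Φ k := by unfold iterMean; gcongr

lemma iterMean_le_mul_sub_succ (hN : 0 < N) {Φ Ψ : α → ℝ}
    (hdec : ∀ x, ∑ i, Φ (T x i) ≤ N * Φ x - Ψ x) (k : ℕ) :
    iterMean T x0 Ψ k ≤ N * (iterMean T x0 Φ k - iterMean T x0 Φ (k + 1)) := by
  have hsum : ∑ w, Ψ (wordIter T x0 k w)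
      ≤ N * ∑ w, Φ (wordIter T x0 k w) - ∑ w, ∑ i, Φ (T (wordIter T x0 k w) i) := by
    rw [Finset.mul_sum, ← Finset.sum_sub_distrib]
    exact Finset.sum_le_sum fun w _ => by linarith [hdec (wordIter T x0 k w)]
  have hN' : (N : ℝ) ≠ 0 := by positivity
  calc iterMean T x0 Ψ k
      ≤ (N : ℝ)⁻¹ ^ k * (N * ∑ w, Φ (wordIter T x0 k w)
          - ∑ w, ∑ i, Φ (T (wordIter T x0 k w) i)) := by
        unfold iterMean; gcongr
    _ = N * (iterMean T x0 Φ k - iterMean T x0 Φ (k + 1)) := by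
        unfold iterMean; rw [sum_wordIter_succ, pow_succ]; field_simp

lemma sum_iterMean_le (hN : 0 < N) {Φ Ψ : α → ℝ}
    (hdec : ∀ x, ∑ i, Φ (T x i) ≤ N * Φ x - Ψ x) {c : ℝ} (hc : ∀ x, c ≤ Φ x) (K : ℕ) :
    ∑ k ∈ Finset.range K, iterMean T x0 Ψ k ≤ N * (Φ x0 - c) := by
  suffices ∑ k ∈ Finset.range K, iterMean T x0 Ψ k ≤ N * (Φ x0 - iterMean T x0 Φ K) by
    have := le_iterMean hN hc (T := T) (x0 := x0) K
    nlinarith [(Nat.cast_pos (α := ℝ)).2 hN]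
  induction K with
  | zero => simp [iterMean, wordIter]
  | succ K ih =>
    rw [Finset.sum_range_succ]
    linarith [iterMean_le_mul_sub_succ hN hdec (x0 := x0) K]

end WordIter

section UniformIndices

variable {Ω : Type*} [MeasurableSpace Ω] {μ : Measure Ω} {N : ℕ} {I : ℕ → Ω → Fin N}

lemma measure_indices_eq (hIindep : iIndepFun I μ)
    (hIunif : ∀ k i, μ (I k ⁻¹' {i}) = (N : ℝ≥0∞)⁻¹) (k : ℕ) (w : Fin k → Fin N) :
    μ ((fun ω (j : Fin k) => I j ω) ⁻¹' {w}) = (N : ℝ≥0∞)⁻¹ ^ k := by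
  have hset : (fun ω (j : Fin k) => I j ω) ⁻¹' {w} = ⋂ j : Fin k, I j ⁻¹' {w j} := by
    ext ω; simp [funext_iff]
  rw [hset, (hIindep.precomp Fin.val_injective).meas_iInter fun j => ⟨{w j}, trivial, rfl⟩]
  simp [hIunif]

lemma lintegral_indices (hImeas : ∀ k, Measurable (I k)) (hIindep : iIndepFun I μ)
    (hIunif : ∀ k i, μ (I k ⁻¹' {i}) = (N : ℝ≥0∞)⁻¹) (k : ℕ) (G : (Fin k → Fin N) → ℝ≥0∞) :
    ∫⁻ ω, G (fun j => I j ω) ∂μ = ∑ w, (N : ℝ≥0∞)⁻¹ ^ k * G w := by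
  have hmeas : Measurable fun ω (j : Fin k) => I j ω := measurable_pi_lambda _ fun j => hImeas j
  rw [← lintegral_map (measurable_of_countable G) hmeas, lintegral_fintype]
  refine Finset.sum_congr rfl fun w _ => ?_
  rw [Measure.map_apply hmeas (measurableSet_singleton w), measure_indices_eq hIindep hIunif,
    mul_comm]

lemma ae_tendsto_zero_of_sum_iterMean_le {α : Type*} (hN : 0 < N)
    (hImeas : ∀ k, Measurable (I k)) (hIindep : iIndepFun I μ)
    (hIunif : ∀ k i, μ (I k ⁻¹' {i}) = (N : ℝ≥0∞)⁻¹)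
    {T : α → Fin N → α} {x0 : α} {X : ℕ → Ω → α}
    (hX : ∀ k ω, X k ω = wordIter T x0 k fun j => I j ω)
    {Ψ : α → ℝ} (hΨ : ∀ x, 0 ≤ Ψ x) {C : ℝ}
    (hC : ∀ K, ∑ k ∈ Finset.range K, iterMean T x0 Ψ k ≤ C) :
    ∀ᵐ ω ∂μ, Tendsto (fun k => Ψ (X k ω)) atTop (nhds 0) := by
  set G : ℕ → Ω → ℝ≥0∞ := fun k ω => ENNReal.ofReal (Ψ (X k ω))
  have hG : ∀ k, G k = (fun w => ENNReal.ofReal (Ψ (wordIter T x0 k w))) ∘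
      fun ω (j : Fin k) => I j ω := fun k => funext fun ω => by simp [G, hX]
  have hmeas : ∀ k, Measurable (G k) := fun k => by
    rw [hG]
    exact (measurable_of_countable _).comp (measurable_pi_lambda _ fun j => hImeas j)
  have hmean : ∀ k, ∫⁻ ω, G k ω ∂μ = ENNReal.ofReal (iterMean T x0 Ψ k) := fun k => by
    simp only [G, hX]
    rw [lintegral_indices hImeas hIindep hIunif k fun w => ENNReal.ofReal (Ψ (wordIter T x0 k w)),
      iterMean, ENNReal.ofReal_mul (by positivity), ENNReal.ofReal_sum_of_nonneg fun w _ => hΨ _,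
      Finset.mul_sum, ENNReal.ofReal_pow (by positivity), ENNReal.ofReal_inv_of_pos (by positivity),
      ENNReal.ofReal_natCast]
  have hfin : ∫⁻ ω, ∑' k, G k ω ∂μ ≠ ∞ := by
    rw [lintegral_tsum fun k => (hmeas k).aemeasurable, ENNReal.tsum_eq_iSup_nat]
    refine ne_top_of_le_ne_top (ENNReal.ofReal_ne_top (r := C)) (iSup_le fun K => ?_)
    simp only [hmean]
    rw [← ENNReal.ofReal_sum_of_nonneg fun k _ => (le_iterMean hN hΨ k)]
    exact ENNReal.ofReal_le_ofReal (hC K)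
  filter_upwards [ae_lt_top (Measurable.tsum hmeas) hfin] with ω hω
  have hG0 := (ENNReal.tendsto_toReal ENNReal.zero_ne_top).comp
    (ENNReal.tendsto_atTop_zero_of_tsum_ne_top hω.ne)
  simpa [G, Function.comp_def, ENNReal.toReal_ofReal (hΨ _)] using hG0

end UniformIndices

theorem stmt19_general {n N : ℕ} (hN : 0 < N) (blk : Fin n → Fin N)
    (L : Fin N → ℝ) (hL : ∀ i, 0 < L i)
    (f h : En n → ℝ) (g : En n → En n) (hg : ∀ x, HasGradientAt f (g x) x)
    (hlip : ∀ (i : Fin N) (x s : En n), (∀ j, blk j ≠ i → s j = 0) →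
      ‖blockProj blk i (g (x + s)) - blockProj blk i (g x)‖ ≤ L i * ‖s‖)
    (H : Fin N → En n → ℝ) (hHconv : ∀ k, ConvexOn ℝ Set.univ (H k))
    (hsep : ∀ x, h x = ∑ k, H k (blockProj blk k x)) (hcont : Continuous h)
    (F : En n → ℝ) (hF : ∀ x, F x = f x + h x) (hFbd : BddBelow (Set.range F))
    -- the block coordinate descent directions
    (d : En n → Fin N → En n)
    (hdsupp : ∀ x i j, blk j ≠ i → d x i j = 0)
    (hdmin : ∀ (x : En n) (i : Fin N) (s : En n), (∀ j, blk j ≠ i → s j = 0) →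
      f x + ⟪g x, d x i⟫ + L i / 2 * ‖d x i‖ ^ 2 + h (x + d x i) ≤
      f x + ⟪g x, s⟫ + L i / 2 * ‖s‖ ^ 2 + h (x + s))
    -- the full proximal-gradient map `d_L`
    (dL : En n → En n)
    (hdL : ∀ x s : En n,
      f x + ⟪g x, dL x⟫ + (1 / 2) * blockNormSq blk L (dL x) + h (x + dL x) ≤
      f x + ⟪g x, s⟫ + (1 / 2) * blockNormSq blk L s + h (x + s))
    -- the i.i.d. uniformly distributed random block indices on a probability space
    {Ω : Type*} [MeasurableSpace Ω] (μ : MeasureTheory.Measure Ω)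
    (I : ℕ → Ω → Fin N) (hImeas : ∀ k, Measurable (I k))
    (hIindep : ProbabilityTheory.iIndepFun I μ)
    (hIunif : ∀ k i, μ (I k ⁻¹' {i}) = (N : ENNReal)⁻¹)
    -- the random iterates
    (x0 : En n) (X : ℕ → Ω → En n) (hX0 : ∀ ω, X 0 ω = x0)
    (hXs : ∀ k ω, X (k + 1) ω = X k ω + d (X k ω) (I k ω)) :
    (∀ᵐ ω ∂μ, Tendsto (fun k => Real.sqrt (blockNormSq blk L (dL (X k ω)))) atTop
      (nhds 0)) ∧
    (∃ Fbar : Ω → ℝ,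
      ∀ᵐ ω ∂μ, Tendsto (fun k => F (X k ω)) atTop (nhds (Fbar ω))) ∧
    (∀ᵐ ω ∂μ, ∀ xbar : En n, MapClusterPt xbar atTop (fun k => X k ω) →
      ∃ gh : En n, IsSubgradientAt h gh xbar ∧ g xbar + gh = 0) := by
  obtain ⟨c, hc⟩ := hFbd
  have hFc : ∀ x, c ≤ F x := fun x => hc ⟨x, rfl⟩
  have hX : ∀ k ω, X k ω = wordIter (fun x i => x + d x i) x0 k fun j => I j ω :=
    fun k ω => eq_wordIter (X := (X · ω)) (w := (I · ω)) (hX0 ω) (fun k => hXs k ω) k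
  have hdec : ∀ x, ∑ i, F (x + d x i) ≤ N * F x - blockNormSq blk L (dL x) / 2 := fun x => by
    simpa only [hF] using sum_add_step_le hg hlip hdsupp hdmin hHconv hsep hdL x
  have hv : ∀ᵐ ω ∂μ, Tendsto (fun k => blockNormSq blk L (dL (X k ω))) atTop (nhds 0) := by
    filter_upwards [ae_tendsto_zero_of_sum_iterMean_le hN hImeas hIindep hIunif hX
      (fun x => div_nonneg (blockNormSq_nonneg hL (dL x)) zero_le_two)
      (sum_iterMean_le hN hdec hFc)] with ω hω
    simpa [mul_div_cancel₀] using hω.const_mul 2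
  refine ⟨?_, ⟨fun ω => ⨅ k, F (X k ω), .of_forall fun ω => ?_⟩, ?_⟩
  · filter_upwards [hv] with ω hω
    simpa using hω.sqrt
  · refine tendsto_atTop_ciInf (antitone_nat_of_succ_le fun k => ?_) ⟨c, ?_⟩
    · rw [hXs, hF, hF]
      exact add_step_le hg hlip hdsupp hdmin _ _
    · rintro _ ⟨k, rfl⟩
      exact hFc _
  · filter_upwards [hv] with ω hω xbar hcl
    exact exists_subgradient_of_mapClusterPt hL hg hlip hHconv hsep hcont hdL hω hcl

/-- **asymptotic convergence of 1-RCD.** Under the block Lipschitz and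
convex-separable assumptions with uniform i.i.d. block selection `I k`, the 1-random
coordinate descent iterates `X (k+1) ω = X k ω + d (X k ω) (I k ω)` satisfy: the
optimality measures `M₁(x^k, L) = ‖D_L d_L(x^k)‖*_L = ‖d_L(x^k)‖_L` converge to `0`
almost surely, `F(x^k)` converges almost surely to a random variable `F̄`, and (almost
surely) every accumulation point of `(x^k)` is a stationary point of
`min_x f(x) + h(x)`, i.e. `0 ∈ ∇f(x̄) + ∂h(x̄)`. -/
theorem stmt19 {n N : ℕ} (hN : 0 < N) (blk : Fin n → Fin N)
    (L : Fin N → ℝ) (hL : ∀ i, 0 < L i)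
    (f h : En n → ℝ) (g : En n → En n) (hg : ∀ x, HasGradientAt f (g x) x)
    (hlip : ∀ (i : Fin N) (x s : En n), (∀ j, blk j ≠ i → s j = 0) →
      ‖blockProj blk i (g (x + s)) - blockProj blk i (g x)‖ ≤ L i * ‖s‖)
    (H : Fin N → En n → ℝ) (hHconv : ∀ k, ConvexOn ℝ Set.univ (H k))
    (hsep : ∀ x, h x = ∑ k, H k (blockProj blk k x)) (hcont : Continuous h)
    (F : En n → ℝ) (hF : ∀ x, F x = f x + h x) (hFbd : BddBelow (Set.range F))
    -- the block coordinate descent directions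
    (d : En n → Fin N → En n)
    (hdsupp : ∀ x i j, blk j ≠ i → d x i j = 0)
    (hdmin : ∀ (x : En n) (i : Fin N) (s : En n), (∀ j, blk j ≠ i → s j = 0) →
      f x + ⟪g x, d x i⟫ + L i / 2 * ‖d x i‖ ^ 2 + h (x + d x i) ≤
      f x + ⟪g x, s⟫ + L i / 2 * ‖s‖ ^ 2 + h (x + s))
    -- the full proximal-gradient map `d_L`
    (dL : En n → En n)
    (hdL : ∀ x s : En n,
      f x + ⟪g x, dL x⟫ + (1 / 2) * blockNormSq blk L (dL x) + h (x + dL x) ≤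
      f x + ⟪g x, s⟫ + (1 / 2) * blockNormSq blk L s + h (x + s))
    -- the i.i.d. uniformly distributed random block indices on a probability space
    {Ω : Type*} [MeasurableSpace Ω] (μ : MeasureTheory.Measure Ω)
    [MeasureTheory.IsProbabilityMeasure μ]
    (I : ℕ → Ω → Fin N) (hImeas : ∀ k, Measurable (I k))
    (hIindep : ProbabilityTheory.iIndepFun I μ)
    (hIunif : ∀ k i, μ (I k ⁻¹' {i}) = (N : ENNReal)⁻¹)
    -- the random iterates
    (x0 : En n) (X : ℕ → Ω → En n) (hX0 : ∀ ω, X 0 ω = x0)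
    (hXs : ∀ k ω, X (k + 1) ω = X k ω + d (X k ω) (I k ω)) :
    (∀ᵐ ω ∂μ, Tendsto (fun k => Real.sqrt (blockNormSq blk L (dL (X k ω)))) atTop
      (nhds 0)) ∧
    (∃ Fbar : Ω → ℝ,
      ∀ᵐ ω ∂μ, Tendsto (fun k => F (X k ω)) atTop (nhds (Fbar ω))) ∧
    (∀ᵐ ω ∂μ, ∀ xbar : En n, MapClusterPt xbar atTop (fun k => X k ω) →
      ∃ gh : En n, IsSubgradientAt h gh xbar ∧ g xbar + gh = 0) :=
  stmt19_general hN blk L hL f h g hg hlip H hHconv hsep hcont F hF hFbd d hdsupp hdmin dL hdL μ I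
    hImeas hIindep hIunif x0 X hX0 hXs
end
end
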